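/- arXiv:0904.4611 — 2 statements merged into one kernel-verified Lean document; each statement's English description precedes it below -/
import Mathlib

section
/- Let α > 3/4, ψ_α(x) = (1+|x|²)^{−α}, and let u : ℝ³ → ℝ be measurable with 0 < u(x) ≤ ψ_α(x) for all x. Define φ(x) = (1/(4π))∫_{ℝ³} u(y)²/|x−y| dy. Then 0 < φ(x) ≤ 1/(2(2α−1)) for every x ∈ ℝ³. -/
open MeasureTheory Filter Topology Metric
open scoped NNReal ENNReal

noncomputable section

/-- Euclidean space `ℝ³`. -/
abbrev E3 := EuclideanSpace ℝ (Fin 3)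

/-- The (classical) Laplacian on `ℝ³`: sum of pure second partial derivatives. -/
def lap (f : E3 → ℝ) (x : E3) : ℝ :=
  ∑ i : Fin 3, iteratedFDeriv ℝ 2 f x (fun _ => EuclideanSpace.single i (1 : ℝ))

/-- Partial derivative in direction `i`. -/
def pd (i : Fin 3) (f : E3 → ℝ) (x : E3) : ℝ :=
  fderiv ℝ f x (EuclideanSpace.single i (1 : ℝ))

/-- Newtonian potential of `u²`: `φ(x) = (1/(4π)) ∫ u(y)²/|x−y| dy`. -/
def newtonPot (u : E3 → ℝ) (x : E3) : ℝ :=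
  (1 / (4 * Real.pi)) * ∫ y : E3, u y ^ 2 / ‖x - y‖

/-- `H(r) = 2α[(2α−1)r² − 3](r²+1)^{−2}`. -/
def Hfun (α r : ℝ) : ℝ := 2 * α * ((2 * α - 1) * r ^ 2 - 3) / (r ^ 2 + 1) ^ 2

/-- `ψ_α(x) = (1+|x|²)^{−α}`. -/
def psiA (α : ℝ) (x : E3) : ℝ := (1 + ‖x‖ ^ 2) ^ (-α)

/-- `f` is locally `γ`-Hölder continuous on `ℝ³`. -/
def LocHolder {Y : Type*} [PseudoEMetricSpace Y] (γ : ℝ≥0) (f : E3 → Y) : Prop :=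
  ∀ x : E3, ∃ C : ℝ≥0, ∃ s ∈ 𝓝 x, HolderOnWith C γ f s

/-- `du`, `d2u` are the weak derivatives of `u` of order one and two
(integration by parts against smooth compactly supported test functions). -/
def IsWeakDerivs (u : E3 → ℝ) (du : Fin 3 → E3 → ℝ)
    (d2u : Fin 3 → Fin 3 → E3 → ℝ) : Prop :=
  (∀ i, ∀ η : E3 → ℝ, ContDiff ℝ (⊤ : ℕ∞) η → HasCompactSupport η →
      ∫ x, u x * pd i η x = -(∫ x, du i x * η x)) ∧
  (∀ i j, ∀ η : E3 → ℝ, ContDiff ℝ (⊤ : ℕ∞) η → HasCompactSupport η →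
      ∫ x, du i x * pd j η x = -(∫ x, d2u i j x * η x))

/-- `u ∈ W^{2,q}(ℝ³)`: `u` and its weak derivatives up to order two lie in `L^q`. -/
def MemW2 (q : ℝ≥0∞) (u : E3 → ℝ) : Prop :=
  MemLp u q volume ∧
    ∃ du d2u, IsWeakDerivs u du d2u ∧ (∀ i, MemLp (du i) q volume) ∧
      ∀ i j, MemLp (d2u i j) q volume

/-- The `W^{2,q}`-norm of `u` is at most `M`. -/
def W2NormLe (q : ℝ≥0∞) (u : E3 → ℝ) (M : ℝ≥0∞) : Prop :=
  ∃ du d2u, IsWeakDerivs u du d2u ∧ (∀ i, MemLp (du i) q volume) ∧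
    (∀ i j, MemLp (d2u i j) q volume) ∧
    eLpNorm u q volume + (∑ i : Fin 3, eLpNorm (du i) q volume)
      + (∑ i : Fin 3, ∑ j : Fin 3, eLpNorm (d2u i j) q volume) ≤ M

/-- The values `∫ (|∇u|² + V u²)` over `u ∈ H¹(ℝ³)` with `∫ u² = 1`. -/
def RayleighSet (V : E3 → ℝ) : Set ℝ :=
  {t : ℝ | ∃ u : E3 → ℝ, Differentiable ℝ u ∧ MemLp u 2 volume ∧
      MemLp (fun x => ‖fderiv ℝ u x‖) 2 volume ∧ (∫ x, u x ^ 2) = 1 ∧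
      t = ∫ x, (‖fderiv ℝ u x‖ ^ 2 + V x * u x ^ 2)}


open Set in
lemma int_inv_ball : IntegrableOn (fun y : E3 => ‖y‖⁻¹) (ball (0:E3) 1) volume := by
  have hmeas : Measurable (fun y : E3 => ‖y‖⁻¹) := measurable_norm.inv
  set V := volume (ball (0:E3) 1) with hV
  have hVfin : V < ⊤ := measure_ball_lt_top
  have hm : ∀ t : ℝ, 0 < t →
      (volume.restrict (ball (0:E3) 1)) {a | t < ‖a‖⁻¹} ≤ V ⊓ (ENNReal.ofReal (t⁻¹^3) * V) := by
    intro t ht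
    refine le_inf ?_ ?_
    · calc (volume.restrict (ball (0:E3) 1)) {a | t < ‖a‖⁻¹}
          ≤ (volume.restrict (ball (0:E3) 1)) univ := measure_mono (subset_univ _)
        _ ≤ V := by rw [Measure.restrict_apply_univ]
    · calc (volume.restrict (ball (0:E3) 1)) {a | t < ‖a‖⁻¹}
          ≤ volume {a : E3 | t < ‖a‖⁻¹} := Measure.restrict_le_self _
        _ ≤ volume (ball (0:E3) t⁻¹) := by
            apply measure_mono
            intro a ha
            simp only [mem_setOf_eq] at ha
            have hna : 0 < ‖a‖ := by
              by_contra h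
              push_neg at h
              have : ‖a‖ = 0 := le_antisymm h (norm_nonneg a)
              rw [this] at ha; simp at ha; linarith
            have : ‖a‖ < t⁻¹ := by
              rw [lt_inv_comm₀ hna ht]; exact ha
            simpa [mem_ball, dist_zero_right] using this
        _ = ENNReal.ofReal (t⁻¹ ^ Module.finrank ℝ E3) * V := by
            rw [hV, Measure.addHaar_ball _ _ (by positivity : (0:ℝ) ≤ t⁻¹)]
        _ = ENNReal.ofReal (t⁻¹^3) * V := by norm_num [finrank_euclideanSpace]
  constructor
  · exact (hmeas.aestronglyMeasurable).restrict
  · rw [hasFiniteIntegral_iff_norm]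
    have hnn : ∀ y : E3, (0:ℝ) ≤ ‖y‖⁻¹ := fun y => by positivity
    calc ∫⁻ y in ball (0:E3) 1, ENNReal.ofReal ‖‖y‖⁻¹‖
        = ∫⁻ t in Ioi (0:ℝ), (volume.restrict (ball (0:E3) 1)) {a | t < ‖a‖⁻¹} := by
          rw [← lintegral_eq_lintegral_meas_lt _ (ae_of_all _ hnn) hmeas.aemeasurable]
          congr 1; ext y; rw [Real.norm_of_nonneg (hnn y)]
      _ ≤ ∫⁻ t in Ioi (0:ℝ), (V ⊓ (ENNReal.ofReal (t⁻¹^3) * V)) := by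
          apply setLIntegral_mono' measurableSet_Ioi
          intro t ht; exact hm t ht
      _ = (∫⁻ t in Ioc (0:ℝ) 1, (V ⊓ (ENNReal.ofReal (t⁻¹^3) * V)))
          + ∫⁻ t in Ioi (1:ℝ), (V ⊓ (ENNReal.ofReal (t⁻¹^3) * V)) := by
          rw [← lintegral_union measurableSet_Ioi Ioc_disjoint_Ioi_same,
            Ioc_union_Ioi_eq_Ioi zero_le_one]
      _ < ⊤ := by
          apply ENNReal.add_lt_top.2
          constructor
          · calc ∫⁻ t in Ioc (0:ℝ) 1, (V ⊓ (ENNReal.ofReal (t⁻¹^3) * V))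
                ≤ ∫⁻ _t in Ioc (0:ℝ) 1, V := by
                  apply setLIntegral_mono' measurableSet_Ioc
                  intro t _; exact inf_le_left
              _ = V * volume (Ioc (0:ℝ) 1) := by rw [setLIntegral_const]
              _ < ⊤ := by
                  apply ENNReal.mul_lt_top hVfin
                  simp [Real.volume_Ioc]
          · have hint : IntegrableOn (fun t : ℝ => t ^ (-3:ℝ)) (Ioi 1) volume :=
              integrableOn_Ioi_rpow_of_lt (by norm_num) one_pos
            calc ∫⁻ t in Ioi (1:ℝ), (V ⊓ (ENNReal.ofReal (t⁻¹^3) * V))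
                ≤ ∫⁻ t in Ioi (1:ℝ), V * ENNReal.ofReal (t ^ (-3:ℝ)) := by
                  apply setLIntegral_mono' measurableSet_Ioi
                  intro t ht
                  have ht' : (0:ℝ) < t := lt_trans one_pos ht
                  refine inf_le_right.trans (le_of_eq ?_)
                  rw [mul_comm]
                  congr 2
                  rw [inv_pow, ← Real.rpow_natCast t 3, ← Real.rpow_neg ht'.le]
                  norm_num
              _ = V * ∫⁻ t in Ioi (1:ℝ), ENNReal.ofReal (t ^ (-3:ℝ)) := by
                  rw [lintegral_const_mul' _ _ hVfin.ne]
              _ < ⊤ := by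
                  apply ENNReal.mul_lt_top hVfin
                  have := hint.2
                  rw [hasFiniteIntegral_iff_norm] at this
                  refine lt_of_le_of_lt (le_of_eq ?_) this
                  apply setLIntegral_congr_fun measurableSet_Ioi
                  intro t ht
                  dsimp only
                  rw [Real.norm_of_nonneg (Real.rpow_nonneg (le_trans zero_le_one (le_of_lt ht)) _)]

section Aux
open Set
variable {α : ℝ}

lemma g_meas : Measurable (fun y : E3 => (1+‖y‖^2)^(-(4*α)/2)) := by fun_prop

lemma g_nonneg (y : E3) : 0 ≤ (1+‖y‖^2)^(-(4*α)/2) := Real.rpow_nonneg (by positivity) _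

lemma g_le_one (hα : 3/4 < α) (y : E3) : (1+‖y‖^2)^(-(4*α)/2 : ℝ) ≤ 1 := by
  apply Real.rpow_le_one_of_one_le_of_nonpos (by nlinarith [sq_nonneg ‖y‖]) (by linarith)

lemma g_int (hα : 3/4 < α) : Integrable (fun y : E3 => (1+‖y‖^2)^(-(4*α)/2)) volume :=
  integrable_rpow_neg_one_add_norm_sq (by simp [finrank_euclideanSpace]; linarith)

lemma kernel_meas (x : E3) : Measurable (fun y : E3 => (1+‖y‖^2)^(-(4*α)/2) / ‖x - y‖) := by
  fun_prop

lemma int_inv_ball' (x : E3) : IntegrableOn (fun y : E3 => ‖x - y‖⁻¹) (ball x 1) volume := by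
  have h1 : Integrable (indicator (ball (0:E3) 1) (fun y : E3 => ‖y‖⁻¹)) volume :=
    (integrable_indicator_iff measurableSet_ball).mpr int_inv_ball
  have h2 := h1.comp_sub_left x
  have h3 : (fun y : E3 => indicator (ball (0:E3) 1) (fun y : E3 => ‖y‖⁻¹) (x - y))
      = indicator (ball x 1) (fun y : E3 => ‖x - y‖⁻¹) := by
    ext y
    by_cases h : x - y ∈ ball (0:E3) 1
    · have hy : y ∈ ball x 1 := by
        simp only [mem_ball, dist_zero_right] at h
        rw [mem_ball, dist_eq_norm, norm_sub_rev]; exact h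
      rw [indicator_of_mem h, indicator_of_mem hy]
    · have hy : y ∉ ball x 1 := by
        simp only [mem_ball, dist_zero_right] at h
        rw [mem_ball, dist_eq_norm, norm_sub_rev]; exact h
      rw [indicator_of_notMem h, indicator_of_notMem hy]
  rw [h3] at h2
  exact (integrable_indicator_iff measurableSet_ball).mp h2

lemma kernel_int (hα : 3/4 < α) (x : E3) :
    Integrable (fun y : E3 => (1+‖y‖^2)^(-(4*α)/2) / ‖x - y‖) volume := by
  rw [← integrableOn_univ, ← union_compl_self (ball x 1)]
  apply IntegrableOn.union
  · apply (int_inv_ball' x).mono' ((kernel_meas x).aestronglyMeasurable.restrict)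
    apply ae_of_all
    intro y
    rw [Real.norm_of_nonneg (by positivity)]
    rw [div_eq_mul_inv]
    calc (1+‖y‖^2)^(-(4*α)/2) * ‖x - y‖⁻¹ ≤ 1 * ‖x - y‖⁻¹ := by
          apply mul_le_mul_of_nonneg_right (g_le_one hα y) (by positivity)
      _ = ‖x - y‖⁻¹ := one_mul _
  · apply ((g_int hα).integrableOn).mono' ((kernel_meas x).aestronglyMeasurable.restrict)
    apply ae_restrict_of_forall_mem measurableSet_ball.compl
    intro y hy
    rw [Real.norm_of_nonneg (by positivity)]
    have h1 : (1:ℝ) ≤ ‖x - y‖ := by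
      simp only [mem_compl_iff, mem_ball, dist_eq_norm, not_lt] at hy
      rwa [norm_sub_rev]
    exact div_le_self (g_nonneg y) h1

lemma g_anti (hα : 3/4 < α) {a b : ℝ} (hab : |a| ≤ |b|) :
    (1+b^2)^(-(4*α)/2 : ℝ) ≤ (1+a^2)^(-(4*α)/2 : ℝ) := by
  apply Real.rpow_le_rpow_of_nonpos (by positivity) _ (by linarith)
  nlinarith [sq_abs a, sq_abs b, abs_nonneg a]

lemma sym_le (hα : 3/4 < α) (x : E3) :
    (∫ y : E3, (1+‖y‖^2)^(-(4*α)/2) / ‖x - y‖) ≤ ∫ y : E3, (1+‖y‖^2)^(-(4*α)/2) / ‖y‖ := by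
  set g : E3 → ℝ := fun y => (1+‖y‖^2)^(-(4*α)/2) with hg
  have intI : Integrable (fun y : E3 => g y / ‖x - y‖) volume := kernel_int hα x
  have intJ : Integrable (fun y : E3 => g y / ‖y‖) volume := by
    have := kernel_int hα (0 : E3)
    simpa using this
  have intA : Integrable (fun y : E3 => g (x - y) / ‖y‖) volume := by
    have h := intI.comp_sub_left x
    refine h.congr (ae_of_all _ fun y => ?_)
    simp [sub_sub_cancel]
  have intB : Integrable (fun y : E3 => g (x - y) / ‖x - y‖) volume := by
    have h := intJ.comp_sub_left x
    exact h
  have hIeq : (∫ y : E3, g y / ‖x - y‖) = ∫ y : E3, g (x - y) / ‖y‖ := by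
    rw [← integral_sub_left_eq_self (fun y : E3 => g (x - y) / ‖y‖) volume x]
    congr 1
    ext y
    rw [sub_sub_cancel]
  have hJeq : (∫ y : E3, g y / ‖y‖) = ∫ y : E3, g (x - y) / ‖x - y‖ := by
    rw [← integral_sub_left_eq_self (fun y : E3 => g (x - y) / ‖x - y‖) volume x]
    congr 1
    ext y
    rw [sub_sub_cancel]
  have key : 0 ≤ ∫ y : E3, ((g y / ‖y‖ + g (x - y) / ‖x - y‖) - (g y / ‖x - y‖ + g (x - y) / ‖y‖)) := by
    apply integral_nonneg_of_ae
    have hnull : volume ({0, x} : Set E3) = 0 := by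
      apply measure_union_null <;> exact measure_singleton _
    rw [EventuallyLE, ae_iff]
    apply measure_mono_null _ hnull
    intro y hy
    simp only [mem_setOf_eq, Pi.zero_apply, not_le] at hy
    by_contra hmem
    simp only [mem_insert_iff, mem_singleton_iff] at hmem
    push_neg at hmem
    obtain ⟨hy0, hyx⟩ := hmem
    have hny : (0:ℝ) < ‖y‖ := norm_pos_iff.mpr hy0
    have hnxy : (0:ℝ) < ‖x - y‖ := by
      rw [norm_pos_iff]; intro h; apply hyx; rw [sub_eq_zero] at h; exact h.symm
    have hprod : (g y / ‖y‖ + g (x - y) / ‖x - y‖) - (g y / ‖x - y‖ + g (x - y) / ‖y‖)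
        = (g y - g (x - y)) * (‖y‖⁻¹ - ‖x - y‖⁻¹) := by
      field_simp
      ring
    rw [hprod] at hy
    rcases le_total ‖y‖ ‖x - y‖ with h | h
    · have h1 : g (x - y) ≤ g y := g_anti hα (by rw [abs_norm, abs_norm]; exact h)
      have h2 : ‖x - y‖⁻¹ ≤ ‖y‖⁻¹ := by
        apply inv_anti₀ hny h
      nlinarith
    · have h1 : g y ≤ g (x - y) := g_anti hα (by rw [abs_norm, abs_norm]; exact h)
      have h2 : ‖y‖⁻¹ ≤ ‖x - y‖⁻¹ := by
        apply inv_anti₀ hnxy h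
      nlinarith
  have i1 : Integrable (fun y : E3 => g y / ‖y‖ + g (x - y) / ‖x - y‖) volume := intJ.add intB
  have i2 : Integrable (fun y : E3 => g y / ‖x - y‖ + g (x - y) / ‖y‖) volume := intI.add intA
  rw [integral_sub i1 i2, integral_add intJ intB, integral_add intI intA,
    ← hIeq, ← hJeq] at key
  linarith

lemma radial_int (hα : 3/4 < α) :
    ∫ t in Ioi (0:ℝ), t * (1+t^2)^(-(4*α)/2) = 1/(2*(2*α-1)) := by
  set β : ℝ := -(4*α)/2 with hβ
  have hβ1 : β + 1 < 0 := by rw [hβ]; linarith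
  set c : ℝ := 1/(2*(β+1)) with hc
  have hderiv : ∀ t ∈ Ioi (0:ℝ),
      HasDerivAt (fun t : ℝ => c * (1+t^2)^(β+1)) (t * (1+t^2)^β) t := by
    intro t _
    have h1 : HasDerivAt (fun t : ℝ => 1+t^2) (2*t) t := by
      simpa using ((hasDerivAt_pow 2 t).const_add 1)
    have h2 := (h1.rpow_const (p := β+1) (Or.inl (by positivity)))
    have h3 := h2.const_mul c
    refine h3.congr_deriv ?_
    rw [hc]
    have : β + 1 ≠ 0 := by linarith
    field_simp
    ring
  have hcont : ContinuousWithinAt (fun t : ℝ => c * (1+t^2)^(β+1)) (Ici (0:ℝ)) 0 := by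
    apply ContinuousAt.continuousWithinAt
    exact (((continuous_const.add (continuous_pow 2)).continuousAt).rpow_const
      (Or.inl (by norm_num : (1:ℝ) + 0^2 ≠ 0))).const_mul c
  have htend : Tendsto (fun t : ℝ => c * (1+t^2)^(β+1)) atTop (𝓝 0) := by
    have h1 : Tendsto (fun t : ℝ => 1+t^2) atTop atTop := by
      apply tendsto_atTop_add_const_left
      exact tendsto_pow_atTop (by norm_num)
    have h2 : Tendsto (fun s : ℝ => s ^ (β+1)) atTop (𝓝 0) := by
      have := tendsto_rpow_neg_atTop (y := -(β+1)) (by linarith)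
      simpa using this
    have := (h2.comp h1).const_mul c
    simpa using this
  have hnn : ∀ t ∈ Ioi (0:ℝ), 0 ≤ t * (1+t^2)^β := by
    intro t ht
    have : (0:ℝ) < t := ht
    positivity
  rw [integral_Ioi_of_hasDerivAt_of_nonneg hcont hderiv hnn htend]
  rw [show (1:ℝ)+0^2 = 1 by norm_num, Real.one_rpow, mul_one, zero_sub, hc, hβ,
    show 2*(-(4*α)/2+1) = -(2*(2*α-1)) by ring, one_div, one_div, inv_neg, neg_neg]

lemma ball_toReal : (volume (ball (0:E3) 1)).toReal = 4/3 * Real.pi := by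
  rw [EuclideanSpace.volume_ball]
  have h52 : Real.Gamma ((Fintype.card (Fin 3) : ℝ)/2 + 1) = 3/4 * Real.sqrt Real.pi := by
    rw [Fintype.card_fin]
    push_cast
    rw [show (3:ℝ)/2 + 1 = (1/2 + 1) + 1 by ring, Real.Gamma_add_one (by norm_num),
      Real.Gamma_add_one (by norm_num), Real.Gamma_one_half_eq]
    ring
  rw [h52]
  rw [ENNReal.toReal_mul, ENNReal.toReal_pow, ENNReal.toReal_ofReal zero_le_one,
    one_pow, one_mul, ENNReal.toReal_ofReal (by positivity)]
  have h3 : Real.sqrt Real.pi ^ 3 = Real.pi * Real.sqrt Real.pi := by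
    rw [show Real.sqrt Real.pi ^ 3 = Real.sqrt Real.pi ^ 2 * Real.sqrt Real.pi by ring,
      Real.sq_sqrt Real.pi_pos.le]
  rw [Fintype.card_fin, h3]
  rw [div_eq_iff (by positivity)]
  ring

lemma Jval (hα : 3/4 < α) :
    ∫ y : E3, (1+‖y‖^2)^(-(4*α)/2) / ‖y‖ = 4*Real.pi*(1/(2*(2*α-1))) := by
  have h := integral_fun_norm_addHaar (volume : Measure E3)
    (fun t : ℝ => (1+t^2)^(-(4*α)/2)/t)
  rw [h]
  have hdim : Module.finrank ℝ E3 = 3 := by simp [finrank_euclideanSpace]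
  rw [hdim, measureReal_def, ball_toReal]
  have hinner : ∫ t in Ioi (0:ℝ), t ^ (3-1) • ((1+t^2)^(-(4*α)/2)/t)
      = 1/(2*(2*α-1)) := by
    rw [← radial_int hα]
    apply setIntegral_congr_fun measurableSet_Ioi
    intro t ht
    have ht' : (0:ℝ) < t := ht
    simp only [smul_eq_mul]
    field_simp
  rw [hinner]
  rw [nsmul_eq_mul, smul_eq_mul]
  ring

end Aux

/-- **Lemma 2.2.** If `0 < u ≤ ψ_α` then the Newtonian potential
`φ(x) = (1/(4π))∫ u(y)²/|x−y| dy` satisfies `0 < φ(x) ≤ 1/(2(2α−1))`. -/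
theorem newtonPot_bound (α : ℝ) (hα : 3 / 4 < α)
    (u : E3 → ℝ) (hu_meas : Measurable u)
    (hu : ∀ x, 0 < u x ∧ u x ≤ psiA α x) :
    ∀ x : E3, 0 < newtonPot u x ∧ newtonPot u x ≤ 1 / (2 * (2 * α - 1)) := by
  intro x
  set g : E3 → ℝ := fun y => (1+‖y‖^2)^(-(4*α)/2) with hgdef
  have hpsi2 : ∀ y : E3, psiA α y ^ 2 = g y := by
    intro y
    rw [hgdef]
    simp only [psiA]
    rw [← Real.rpow_natCast ((1+‖y‖^2) ^ (-α)) 2, ← Real.rpow_mul (by positivity)]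
    congr 1
    push_cast
    ring
  have hubd : ∀ y : E3, u y ^ 2 ≤ g y := by
    intro y
    rw [← hpsi2 y]
    exact pow_le_pow_left₀ (hu y).1.le (hu y).2 2
  have hmeash : Measurable (fun y : E3 => u y ^ 2 / ‖x - y‖) := by fun_prop
  have hint : Integrable (fun y : E3 => u y ^ 2 / ‖x - y‖) volume := by
    apply (kernel_int hα x).mono' hmeash.aestronglyMeasurable
    apply ae_of_all
    intro y
    rw [Real.norm_of_nonneg (by positivity)]
    rw [div_eq_mul_inv, div_eq_mul_inv]
    exact mul_le_mul_of_nonneg_right (hubd y) (by positivity)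
  have hpos : 0 < ∫ y : E3, u y ^ 2 / ‖x - y‖ := by
    rw [integral_pos_iff_support_of_nonneg (fun y => by positivity) hint]
    have hsub : ball x 1 \ {x} ⊆ Function.support (fun y : E3 => u y ^ 2 / ‖x - y‖) := by
      intro y hy
      have hyx : y ≠ x := hy.2
      have h1 : (0:ℝ) < ‖x - y‖ := by
        rw [norm_pos_iff, sub_ne_zero]
        exact fun h => hyx h.symm
      have h2 : (0:ℝ) < u y ^ 2 := pow_pos (hu y).1 2
      simp only [Function.mem_support]
      positivity
    refine lt_of_lt_of_le ?_ (measure_mono hsub)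
    rw [measure_diff_null (measure_singleton x)]
    exact measure_ball_pos _ _ one_pos
  have hπ : (0:ℝ) < Real.pi := Real.pi_pos
  constructor
  · unfold newtonPot
    positivity
  · unfold newtonPot
    have h1 : (∫ y : E3, u y ^ 2 / ‖x - y‖) ≤ ∫ y : E3, g y / ‖x - y‖ := by
      apply integral_mono hint (kernel_int hα x)
      intro y
      dsimp only
      rw [div_eq_mul_inv, div_eq_mul_inv]
      exact mul_le_mul_of_nonneg_right (hubd y) (by positivity)
    have h2 := sym_le hα x
    have h3 := Jval hα
    have hne : (2*α - 1) ≠ 0 := by intro h; linarith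
    calc 1/(4*Real.pi) * ∫ y : E3, u y ^ 2 / ‖x - y‖
        ≤ 1/(4*Real.pi) * (4*Real.pi*(1/(2*(2*α-1)))) := by
          apply mul_le_mul_of_nonneg_left _ (by positivity)
          rw [← h3]
          exact le_trans h1 h2
      _ = 1/(2*(2*α-1)) := by
          field_simp
end
end

section
/- Let α > 3/4, Λ < 0, λ ∈ [0, −2(2α−1)Λ), let u : ℝ³ → ℝ be measurable with 0 < u(x) ≤ (1+|x|²)^{−α} for all x, and let φ(x) = (1/(4π))∫_{ℝ³} u(y)²/|x−y| dy. Then λφ(x) + Λ ≤ (λ + 2(2α−1)Λ)/(2(2α−1)) < 0 for every x ∈ ℝ³. -/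
open MeasureTheory Filter Topology Metric
open scoped NNReal ENNReal

noncomputable section

section AuxPotentialShift
open Set

lemma inv_swap' {a t : ℝ} (ha : 0 < a) (ht : 0 < t) (h : a < t⁻¹) : t < a⁻¹ := by
  have h1 : t * a < 1 := by
    have := mul_lt_mul_of_pos_left h ht
    rwa [mul_inv_cancel₀ ht.ne'] at this
  calc t = t * a * a⁻¹ := by field_simp
  _ < 1 * a⁻¹ := by
      exact mul_lt_mul_of_pos_right h1 (inv_pos.2 ha)
  _ = a⁻¹ := one_mul _

lemma vol_ball_E3 : volume (ball (0:E3) 1) = ENNReal.ofReal (4 * Real.pi / 3) := by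
  rw [EuclideanSpace.volume_ball]
  have hcard : (Fintype.card (Fin 3) : ℝ) = 3 := by simp
  have hg : Real.Gamma ((Fintype.card (Fin 3) : ℝ) / 2 + 1) = 3 / 4 * Real.sqrt Real.pi := by
    rw [hcard]
    have h1 : (3:ℝ)/2 + 1 = (1/2 + 1) + 1 := by ring
    rw [h1, Real.Gamma_add_one (by norm_num), Real.Gamma_add_one (by norm_num),
      Real.Gamma_one_half_eq]
    ring
  rw [hg]
  have hsq : Real.sqrt Real.pi ^ Fintype.card (Fin 3) = Real.pi * Real.sqrt Real.pi := by
    have : Fintype.card (Fin 3) = 3 := by simp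
    rw [this]
    have := Real.sq_sqrt Real.pi_pos.le
    nlinarith [Real.sqrt_nonneg Real.pi]
  rw [hsq]
  have hs : Real.sqrt Real.pi > 0 := Real.sqrt_pos.2 Real.pi_pos
  have : Real.pi * Real.sqrt Real.pi / (3 / 4 * Real.sqrt Real.pi) = 4 * Real.pi / 3 := by
    field_simp
  rw [this]
  simp


lemma hasDerivAt_aux {α : ℝ} (hα : 3/4 < α) (r : ℝ) :
    HasDerivAt (fun s : ℝ => -((1 + s ^ 2) ^ (-(2*α-1))) / (2*(2*α-1)))
      (r * (1 + r ^ 2) ^ (-(2*α))) r := by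
  have hb : (0:ℝ) < 2*α - 1 := by linarith
  have hpos : (0:ℝ) < 1 + r ^ 2 := by positivity
  have h1 : HasDerivAt (fun s : ℝ => 1 + s ^ 2) (2*r) r := by
    simpa using ((hasDerivAt_pow 2 r).const_add 1)
  have h2 : HasDerivAt (fun t : ℝ => t ^ (-(2*α-1)))
      ((-(2*α-1)) * (1 + r ^ 2) ^ ((-(2*α-1)) - 1)) (1 + r ^ 2) :=
    Real.hasDerivAt_rpow_const (Or.inl hpos.ne')
  have h3 := (h2.comp r h1).neg.div_const (2*(2*α-1))
  refine h3.congr_deriv ?_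
  have he : (-(2*α-1)) - 1 = -(2*α) := by ring
  rw [he]
  field_simp

lemma tendsto_aux {α : ℝ} (hα : 3/4 < α) :
    Tendsto (fun s : ℝ => -((1 + s ^ 2) ^ (-(2*α-1))) / (2*(2*α-1))) atTop (𝓝 0) := by
  have hb : (0:ℝ) < 2*α - 1 := by linarith
  have h1 : Tendsto (fun s : ℝ => 1 + s ^ 2) atTop atTop :=
    tendsto_atTop_add_const_left _ 1 (tendsto_pow_atTop two_ne_zero)
  have h2 : Tendsto (fun s : ℝ => (1 + s ^ 2) ^ (-(2*α-1))) atTop (𝓝 0) :=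
    (tendsto_rpow_neg_atTop hb).comp h1
  have := (h2.neg).div_const (2*(2*α-1))
  simpa using this

lemma integrableOn_aux {α : ℝ} (hα : 3/4 < α) :
    IntegrableOn (fun r : ℝ => r * (1 + r ^ 2) ^ (-(2*α))) (Ioi (0:ℝ)) :=
  integrableOn_Ioi_deriv_of_nonneg' (fun x _ => hasDerivAt_aux hα x)
    (fun x hx => mul_nonneg (le_of_lt hx) (Real.rpow_nonneg (by positivity) _)) (tendsto_aux hα)

lemma integral_aux {α : ℝ} (hα : 3/4 < α) :
    ∫ r in Ioi (0:ℝ), r * (1 + r ^ 2) ^ (-(2*α)) = 1 / (2*(2*α-1)) := by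
  have hb : (0:ℝ) < 2*α - 1 := by linarith
  rw [integral_Ioi_of_hasDerivAt_of_nonneg' (fun x _ => hasDerivAt_aux hα x)
    (fun x hx => mul_nonneg (le_of_lt hx) (Real.rpow_nonneg (by positivity) _)) (tendsto_aux hα)]
  norm_num [Real.one_rpow]
  rw [neg_div, neg_neg]
  field_simp


def F3 (α : ℝ) : E3 → ℝ≥0∞ := fun y => ENNReal.ofReal ((1 + ‖y‖ ^ 2) ^ (-(2*α)))

lemma F3_meas (α : ℝ) : Measurable (F3 α) := by
  unfold F3; fun_prop

lemma F3_anti {α : ℝ} (hα : 0 < α) {c : ℝ} (hc : 0 ≤ c) {y : E3} (h : c ≤ ‖y‖) :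
    F3 α y ≤ ENNReal.ofReal ((1 + c ^ 2) ^ (-(2*α))) := by
  apply ENNReal.ofReal_le_ofReal
  apply Real.rpow_le_rpow_of_nonpos (by positivity) (by nlinarith [norm_nonneg y]) (by linarith)

lemma F3_anti' {α : ℝ} (hα : 0 < α) {c : ℝ} (hc : 0 ≤ c) {y : E3} (h : ‖y‖ ≤ c) :
    ENNReal.ofReal ((1 + c ^ 2) ^ (-(2*α))) ≤ F3 α y := by
  apply ENNReal.ofReal_le_ofReal
  apply Real.rpow_le_rpow_of_nonpos (by positivity) (by nlinarith [norm_nonneg y]) (by linarith)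

lemma mu_ball_le {α : ℝ} (hα : 0 < α) (x : E3) (r : ℝ) :
    (volume.withDensity (F3 α)) (ball x r) ≤ (volume.withDensity (F3 α)) (ball (0:E3) r) := by
  set μ := volume.withDensity (F3 α) with hμ
  have hw : ∀ s : Set E3, MeasurableSet s → μ s = ∫⁻ y in s, F3 α y ∂volume :=
    fun s hs => withDensity_apply _ hs
  set c : ℝ≥0∞ := ENNReal.ofReal ((1 + r ^ 2) ^ (-(2*α))) with hc
  have hA : MeasurableSet (ball x r \ ball (0:E3) r) :=
    measurableSet_ball.diff measurableSet_ball
  have hB : MeasurableSet (ball (0:E3) r \ ball x r) :=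
    measurableSet_ball.diff measurableSet_ball
  -- μ on the difference sets
  have h1 : μ (ball x r \ ball (0:E3) r) ≤ c * volume (ball x r \ ball (0:E3) r) := by
    rw [hw _ hA]
    calc ∫⁻ y in ball x r \ ball (0:E3) r, F3 α y ∂volume
        ≤ ∫⁻ _ in ball x r \ ball (0:E3) r, c ∂volume := by
          apply setLIntegral_mono' hA
          intro y hy
          have : r ≤ ‖y‖ := by
            have := hy.2
            simpa [mem_ball, dist_zero_right, not_lt] using this
          have hr0 : (0:ℝ) ≤ r := le_trans dist_nonneg (mem_ball.mp hy.1).le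
          exact F3_anti hα hr0 this
      _ = c * volume (ball x r \ ball (0:E3) r) := by
          rw [setLIntegral_const]
  have h2 : c * volume (ball (0:E3) r \ ball x r) ≤ μ (ball (0:E3) r \ ball x r) := by
    rw [hw _ hB]
    calc c * volume (ball (0:E3) r \ ball x r)
        = ∫⁻ _ in ball (0:E3) r \ ball x r, c ∂volume := by rw [setLIntegral_const]
      _ ≤ ∫⁻ y in ball (0:E3) r \ ball x r, F3 α y ∂volume := by
          apply setLIntegral_mono' hB
          intro y hy
          have hyr : ‖y‖ ≤ r := by
            have := hy.1
            rw [mem_ball, dist_zero_right] at this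
            exact this.le
          have hr0 : 0 ≤ r := (norm_nonneg y).trans hyr
          exact F3_anti' hα hr0 hyr
  -- equal volumes of the difference sets
  have hvol : volume (ball x r \ ball (0:E3) r) = volume (ball (0:E3) r \ ball x r) := by
    have e1 := measure_inter_add_diff (μ := (volume : Measure E3)) (ball x r) measurableSet_ball
      (t := ball (0:E3) r)
    have e2 := measure_inter_add_diff (μ := (volume : Measure E3)) (ball (0:E3) r)
      measurableSet_ball (t := ball x r)
    have hcen : volume (ball x r) = volume (ball (0:E3) r) :=
      Measure.addHaar_ball_center volume x r
    have hint : volume (ball (0:E3) r ∩ ball x r) = volume (ball x r ∩ ball (0:E3) r) := by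
      rw [inter_comm]
    have hfin : volume (ball x r ∩ ball (0:E3) r) ≠ ⊤ :=
      (lt_of_le_of_lt (measure_mono inter_subset_left) measure_ball_lt_top).ne
    apply ENNReal.add_right_inj hfin |>.mp
    rw [e1, hcen, ← e2, hint]
  -- assemble
  have d1 := measure_inter_add_diff (μ := μ) (ball x r) (measurableSet_ball (x := (0:E3)) (ε := r))
  have d2 := measure_inter_add_diff (μ := μ) (ball (0:E3) r) (measurableSet_ball (x := x) (ε := r))
  calc μ (ball x r) = μ (ball x r ∩ ball (0:E3) r) + μ (ball x r \ ball (0:E3) r) := d1.symm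
    _ ≤ μ (ball x r ∩ ball (0:E3) r) + c * volume (ball x r \ ball (0:E3) r) := by gcongr
    _ = μ (ball (0:E3) r ∩ ball x r) + c * volume (ball (0:E3) r \ ball x r) := by
        rw [hvol, inter_comm]
    _ ≤ μ (ball (0:E3) r ∩ ball x r) + μ (ball (0:E3) r \ ball x r) := by gcongr
    _ = μ (ball (0:E3) r) := d2

lemma lintegral_radial_E3 (F : ℝ → ℝ≥0∞) (hF : Measurable F) :
    ∫⁻ x : E3, F ‖x‖ = ENNReal.ofReal (4 * Real.pi) *
      ∫⁻ r in Ioi (0:ℝ), ENNReal.ofReal (r ^ 2) * F r := by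
  have hdim : Module.finrank ℝ E3 = 3 := finrank_euclideanSpace_fin
  have h1 : ∫⁻ x : E3, F ‖x‖ = ∫⁻ x in ({0}ᶜ : Set E3), F ‖x‖ := by
    rw [restrict_compl_singleton]
  have h2 : ∫⁻ x in ({0}ᶜ : Set E3), F ‖x‖ =
      ∫⁻ x : ({0}ᶜ : Set E3), F ‖x.1‖ ∂(volume.comap Subtype.val) :=
    (lintegral_subtype_comap (measurableSet_singleton 0).compl _).symm
  have h3 : ∫⁻ x : ({0}ᶜ : Set E3), F ‖x.1‖ ∂(volume.comap Subtype.val) =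
      ∫⁻ p : Metric.sphere (0:E3) 1 × Ioi (0:ℝ), F p.2
        ∂((volume : Measure E3).toSphere.prod (Measure.volumeIoiPow (Module.finrank ℝ E3 - 1))) :=
    by rw [← (Measure.measurePreserving_homeomorphUnitSphereProd (volume : Measure E3)).lintegral_comp_emb
      (Homeomorph.measurableEmbedding _) (fun p => F p.2)]; simp only [homeomorphUnitSphereProd_apply_snd_coe]
  have hmp : AEMeasurable (fun p : Metric.sphere (0:E3) 1 × Ioi (0:ℝ) => F ↑p.2)
      (((volume : Measure E3).toSphere.prod (Measure.volumeIoiPow 2))) :=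
    (hF.comp (measurable_subtype_coe.comp measurable_snd)).aemeasurable
  have h4 : ∫⁻ p : Metric.sphere (0:E3) 1 × Ioi (0:ℝ), F p.2
        ∂((volume : Measure E3).toSphere.prod (Measure.volumeIoiPow (Module.finrank ℝ E3 - 1))) =
      (volume : Measure E3).toSphere univ *
        ∫⁻ r : Ioi (0:ℝ), F r ∂(Measure.volumeIoiPow 2) := by
    rw [hdim]
    rw [lintegral_prod _ hmp]
    have : ∀ x : Metric.sphere (0:E3) 1,
        (∫⁻ y : Ioi (0:ℝ), F ↑(x, y).2 ∂(Measure.volumeIoiPow 2)) =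
        ∫⁻ r : Ioi (0:ℝ), F r ∂(Measure.volumeIoiPow 2) := fun x => rfl
    simp only [this]
    rw [lintegral_const, mul_comm]
  have h5 : ∫⁻ r : Ioi (0:ℝ), F r ∂(Measure.volumeIoiPow 2) =
      ∫⁻ r in Ioi (0:ℝ), ENNReal.ofReal (r ^ 2) * F r := by
    rw [Measure.volumeIoiPow,
      lintegral_withDensity_eq_lintegral_mul _
        (f := fun r : Ioi (0:ℝ) => ENNReal.ofReal ((r:ℝ) ^ 2)) (by fun_prop)
        (g := fun r : Ioi (0:ℝ) => F ↑r) (by fun_prop)]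
    exact lintegral_subtype_comap measurableSet_Ioi (fun t => ENNReal.ofReal (t ^ 2) * F t)
  have h6 : (volume : Measure E3).toSphere univ = ENNReal.ofReal (4 * Real.pi) := by
    rw [Measure.toSphere_apply_univ, hdim, vol_ball_E3]
    rw [show ((3:ℕ) : ℝ≥0∞) = ENNReal.ofReal 3 by simp, ← ENNReal.ofReal_mul (by norm_num)]
    congr 1
    ring
  rw [h1, h2, h3, h4, h5, h6]

lemma key_bound {α : ℝ} (hα : 3/4 < α) (x : E3) (u : E3 → ℝ) (hu_meas : Measurable u)
    (hu : ∀ y, 0 < u y ∧ u y ≤ psiA α y) :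
    ∫⁻ y : E3, ENNReal.ofReal (u y ^ 2 / ‖x - y‖) ≤
      ENNReal.ofReal (4 * Real.pi * (1 / (2*(2*α-1)))) := by
  have hα0 : (0:ℝ) < α := by linarith
  set μ := volume.withDensity (F3 α) with hμdef
  have hμ0 : μ ({0} : Set E3) = 0 :=
    (withDensity_absolutelyContinuous volume (F3 α)) (measure_singleton 0)
  -- pointwise bound
  have step1 : ∀ y : E3, ENNReal.ofReal (u y ^ 2 / ‖x - y‖) ≤
      F3 α y * ENNReal.ofReal ‖x - y‖⁻¹ := by
    intro y
    rw [div_eq_mul_inv, ENNReal.ofReal_mul (sq_nonneg _)]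
    have h2 : u y ^ 2 ≤ (1 + ‖y‖ ^ 2) ^ (-(2*α)) := by
      have hpsi := (hu y).2
      unfold psiA at hpsi
      have hb : (0:ℝ) < 1 + ‖y‖ ^ 2 := by positivity
      have h3 : u y ^ 2 ≤ ((1 + ‖y‖ ^ 2) ^ (-α)) ^ 2 :=
        pow_le_pow_left₀ (hu y).1.le hpsi 2
      refine h3.trans (le_of_eq ?_)
      rw [← Real.rpow_natCast ((1 + ‖y‖ ^ 2) ^ (-α)) 2, ← Real.rpow_mul hb.le]
      congr 1
      push_cast
      ring
    exact mul_le_mul_left (ENNReal.ofReal_le_ofReal h2) _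
  have hinvmeas : Measurable fun y : E3 => ENNReal.ofReal ‖x - y‖⁻¹ := by fun_prop
  have step3 : ∫⁻ y : E3, F3 α y * ENNReal.ofReal ‖x - y‖⁻¹ =
      ∫⁻ y : E3, ENNReal.ofReal ‖x - y‖⁻¹ ∂μ :=
    (lintegral_withDensity_eq_lintegral_mul volume (F3_meas α) hinvmeas).symm
  have step4 : ∫⁻ y : E3, ENNReal.ofReal ‖x - y‖⁻¹ ∂μ =
      ∫⁻ t in Ioi (0:ℝ), μ {y : E3 | t < ‖x - y‖⁻¹} :=
    lintegral_eq_lintegral_meas_lt μ (ae_of_all _ fun y => inv_nonneg.2 (norm_nonneg _))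
      (by fun_prop : Measurable fun y : E3 => ‖x - y‖⁻¹).aemeasurable
  have step6 : ∫⁻ y : E3, ENNReal.ofReal ‖(0:E3) - y‖⁻¹ ∂μ =
      ∫⁻ t in Ioi (0:ℝ), μ {y : E3 | t < ‖(0:E3) - y‖⁻¹} :=
    lintegral_eq_lintegral_meas_lt μ (ae_of_all _ fun y => inv_nonneg.2 (norm_nonneg _))
      (by fun_prop : Measurable fun y : E3 => ‖(0:E3) - y‖⁻¹).aemeasurable
  have step5 : ∫⁻ t in Ioi (0:ℝ), μ {y : E3 | t < ‖x - y‖⁻¹} ≤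
      ∫⁻ t in Ioi (0:ℝ), μ {y : E3 | t < ‖(0:E3) - y‖⁻¹} := by
    apply lintegral_mono_ae
    filter_upwards [ae_restrict_mem measurableSet_Ioi] with t ht
    rw [mem_Ioi] at ht
    have hsub1 : {y : E3 | t < ‖x - y‖⁻¹} ⊆ ball x t⁻¹ := by
      intro y hy
      simp only [mem_setOf_eq] at hy
      have hnz : 0 < ‖x - y‖ := by
        rcases (norm_nonneg (x - y)).eq_or_lt with h0 | h0
        · exfalso; rw [← h0] at hy; simp at hy; linarith
        · exact h0
      have : ‖x - y‖ < t⁻¹ := inv_swap' ht hnz hy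
      rw [mem_ball, dist_eq_norm, ← norm_neg]
      simpa [neg_sub] using this
    have hsub2 : ball (0:E3) t⁻¹ \ {0} ⊆ {y : E3 | t < ‖(0:E3) - y‖⁻¹} := by
      intro y hy
      have hyb : ‖y‖ < t⁻¹ := by
        have := hy.1; rwa [mem_ball, dist_zero_right] at this
      have hy0 : 0 < ‖y‖ := by
        rcases (norm_nonneg y).eq_or_lt with h0 | h0
        · exact absurd (norm_eq_zero.mp h0.symm) (by simpa using hy.2)
        · exact h0
      have : t < ‖y‖⁻¹ := inv_swap' hy0 ht hyb
      simpa [zero_sub, norm_neg, mem_setOf_eq] using this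
    calc μ {y : E3 | t < ‖x - y‖⁻¹} ≤ μ (ball x t⁻¹) := measure_mono hsub1
      _ ≤ μ (ball (0:E3) t⁻¹) := mu_ball_le hα0 x t⁻¹
      _ = μ (ball (0:E3) t⁻¹ \ {0}) := (measure_diff_null hμ0).symm
      _ ≤ μ {y : E3 | t < ‖(0:E3) - y‖⁻¹} := measure_mono hsub2
  have step7 : ∫⁻ y : E3, ENNReal.ofReal ‖(0:E3) - y‖⁻¹ ∂μ =
      ∫⁻ y : E3, ENNReal.ofReal ((1 + ‖y‖ ^ 2) ^ (-(2*α)) * ‖y‖⁻¹) := by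
    rw [hμdef, lintegral_withDensity_eq_lintegral_mul volume (F3_meas α)
      (by fun_prop : Measurable fun y : E3 => ENNReal.ofReal ‖(0:E3) - y‖⁻¹)]
    apply lintegral_congr
    intro y
    simp only [Pi.mul_apply, F3, zero_sub, norm_neg]
    rw [← ENNReal.ofReal_mul (by positivity)]
  have step8 : (∫⁻ y : E3, ENNReal.ofReal ((1 + ‖y‖ ^ 2) ^ (-(2*α)) * ‖y‖⁻¹)) =
      ENNReal.ofReal (4 * Real.pi) *
        ∫⁻ r in Ioi (0:ℝ), ENNReal.ofReal (r ^ 2) *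
          ENNReal.ofReal ((1 + r ^ 2) ^ (-(2*α)) * r⁻¹) := by
    exact lintegral_radial_E3 (fun t => ENNReal.ofReal ((1 + t ^ 2) ^ (-(2*α)) * t⁻¹))
      (by fun_prop)
  have step10 : (∫⁻ r in Ioi (0:ℝ), ENNReal.ofReal (r ^ 2) *
      ENNReal.ofReal ((1 + r ^ 2) ^ (-(2*α)) * r⁻¹)) =
      ENNReal.ofReal (1 / (2*(2*α-1))) := by
    have hcong : ∫⁻ r in Ioi (0:ℝ), ENNReal.ofReal (r ^ 2) *
        ENNReal.ofReal ((1 + r ^ 2) ^ (-(2*α)) * r⁻¹) =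
        ∫⁻ r in Ioi (0:ℝ), ENNReal.ofReal (r * (1 + r ^ 2) ^ (-(2*α))) := by
      apply setLIntegral_congr_fun measurableSet_Ioi
      intro r hr
      dsimp only
      rw [← ENNReal.ofReal_mul (by positivity)]
      congr 1
      have : r ≠ 0 := ne_of_gt hr
      field_simp
    rw [hcong, ← ofReal_integral_eq_lintegral_ofReal (integrableOn_aux hα) ?hnn, integral_aux hα]
    case hnn =>
      filter_upwards [ae_restrict_mem measurableSet_Ioi] with r hr
      exact mul_nonneg (le_of_lt hr) (Real.rpow_nonneg (by positivity) _)
  calc ∫⁻ y : E3, ENNReal.ofReal (u y ^ 2 / ‖x - y‖)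
      ≤ ∫⁻ y : E3, F3 α y * ENNReal.ofReal ‖x - y‖⁻¹ := lintegral_mono step1
    _ = ∫⁻ t in Ioi (0:ℝ), μ {y : E3 | t < ‖x - y‖⁻¹} := by rw [step3, step4]
    _ ≤ ∫⁻ t in Ioi (0:ℝ), μ {y : E3 | t < ‖(0:E3) - y‖⁻¹} := step5
    _ = ENNReal.ofReal (4 * Real.pi) * ENNReal.ofReal (1 / (2*(2*α-1))) := by
        rw [← step6, step7, step8, step10]
    _ = ENNReal.ofReal (4 * Real.pi * (1 / (2*(2*α-1)))) := by
        rw [← ENNReal.ofReal_mul (by positivity)]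


end AuxPotentialShift

/-- For `λ ∈ [0, −2(2α−1)Λ)` and `0 < u ≤ ψ_α`, the Newtonian potential `φ` of `u²`
satisfies `λφ(x) + Λ ≤ (λ + 2(2α−1)Λ)/(2(2α−1)) < 0`. -/
theorem potential_shift_negative (α : ℝ) (hα : 3 / 4 < α)
    (Λ : ℝ) (hΛ : Λ < 0)
    (lam : ℝ) (hlam0 : 0 ≤ lam) (hlam1 : lam < -(2 * (2 * α - 1) * Λ))
    (u : E3 → ℝ) (hu_meas : Measurable u)
    (hu : ∀ x, 0 < u x ∧ u x ≤ psiA α x) :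
    (∀ x : E3, lam * newtonPot u x + Λ ≤ (lam + 2 * (2 * α - 1) * Λ) / (2 * (2 * α - 1))) ∧
    (lam + 2 * (2 * α - 1) * Λ) / (2 * (2 * α - 1)) < 0 := by
  have hb : (0:ℝ) < 2*(2*α-1) := by linarith
  constructor
  · intro x
    have hphi : newtonPot u x ≤ 1/(2*(2*α-1)) := by
      unfold newtonPot
      have hmeas : AEStronglyMeasurable (fun y : E3 => u y ^ 2 / ‖x - y‖) volume :=
        Measurable.aestronglyMeasurable (by fun_prop)
      rw [integral_eq_lintegral_of_nonneg_ae
        (ae_of_all _ fun y => div_nonneg (sq_nonneg _) (norm_nonneg _)) hmeas]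
      have h1 : (∫⁻ y : E3, ENNReal.ofReal (u y ^ 2 / ‖x - y‖)).toReal ≤
          4*Real.pi*(1/(2*(2*α-1))) :=
        ENNReal.toReal_le_of_le_ofReal (by positivity) (key_bound hα x u hu_meas hu)
      calc (1/(4*Real.pi)) * (∫⁻ y : E3, ENNReal.ofReal (u y ^ 2 / ‖x - y‖)).toReal
          ≤ (1/(4*Real.pi)) * (4*Real.pi*(1/(2*(2*α-1)))) :=
            mul_le_mul_of_nonneg_left h1 (by positivity)
        _ = 1/(2*(2*α-1)) := by
            field_simp
    have h2 : lam * newtonPot u x ≤ lam * (1/(2*(2*α-1))) :=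
      mul_le_mul_of_nonneg_left hphi hlam0
    have harith : lam * (1/(2*(2*α-1))) + Λ = (lam + 2*(2*α-1)*Λ)/(2*(2*α-1)) := by
      have hb1 : (2*α-1) ≠ 0 := (by linarith : (0:ℝ) < 2*α-1).ne'
      field_simp
    have hgoal : (lam + 2*(2*α-1)*Λ)/(2*(2*α-1)) = (lam + 2 * (2 * α - 1) * Λ) / (2 * (2 * α - 1)) := rfl
    linarith [h2, harith.le, harith.ge]
  · apply div_neg_of_neg_of_pos _ hb
    linarith
end
end
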